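/- arXiv:1807.02506 — 2 statements merged into one kernel-verified Lean document; each statement's English description precedes it below -/
import Mathlib

section
/- With the notation M_d, r_d, R_d as above and R_d' = lcm(R_d, r_d²), one has M_d² · R_d' = lcm(q, d²). -/
open Finset

/-- `M_d = ∏_{p ∣ d, v_p(d) ≥ v_p(q)} p^{v_p(d)}`. -/
def Md (q d : ℕ) : ℕ :=
  ∏ p ∈ d.primeFactors.filter (fun p => q.factorization p ≤ d.factorization p),
    p ^ d.factorization p

/-- `r_d = ∏_{p ∣ d, v_p(d) < v_p(q)} p^{v_p(d)}`. -/
def rd (q d : ℕ) : ℕ :=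
  ∏ p ∈ d.primeFactors.filter (fun p => d.factorization p < q.factorization p),
    p ^ d.factorization p

/-- `R_d = ∏_{p ∣ gcd(q, r_d)} p^{v_p(q)} ⬝ ∏_{p ∣ q, p ∤ d} p^{v_p(q)}`. -/
def Rd (q d : ℕ) : ℕ :=
  (∏ p ∈ (Nat.gcd q (rd q d)).primeFactors, p ^ q.factorization p) *
    ∏ p ∈ q.primeFactors.filter (fun p => ¬ p ∣ d), p ^ q.factorization p

/-- `R_d' = lcm(R_d, r_d²)`. -/
def Rd' (q d : ℕ) : ℕ := Nat.lcm (Rd q d) (rd q d ^ 2)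

/-!
Both sides are compared prime by prime. Write `a = v_p(q)` and `b = v_p(d)`; the right-hand side
has valuation `max a (2b)`. If `a ≤ b`, then `p` divides neither `r_d` nor `R_d`, and `M_d²`
carries `p^(2b)`. If `b < a`, then `p ∤ M_d`, and `p` divides exactly one of the two factors
of `R_d` (the first when `0 < b`, the second when `b = 0`), so `v_p(R_d') = max a (2b)`.
-/

namespace Nat

theorem prime_of_mem_filter_primeFactors {n : ℕ} {P : ℕ → Prop} [DecidablePred P] {p : ℕ}
    (hp : p ∈ n.primeFactors.filter P) : p.Prime :=
  prime_of_mem_primeFactors (mem_filter.mp hp).1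

theorem mem_primeFactors_iff_factorization_ne_zero {n p : ℕ} :
    p ∈ n.primeFactors ↔ n.factorization p ≠ 0 := by
  rw [← support_factorization, Finsupp.mem_support_iff]

theorem prod_pow_ne_zero_of_prime {s : Finset ℕ} (hs : ∀ p ∈ s, p.Prime) (f : ℕ → ℕ) :
    ∏ p ∈ s, p ^ f p ≠ 0 :=
  prod_ne_zero_iff.mpr fun p hp => pow_ne_zero _ (hs p hp).ne_zero

theorem factorization_prod_pow_of_prime {s : Finset ℕ} (hs : ∀ p ∈ s, p.Prime) (f : ℕ → ℕ)
    (p : ℕ) : (∏ q ∈ s, q ^ f q).factorization p = if p ∈ s then f p else 0 := by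
  rw [factorization_prod fun q hq => pow_ne_zero _ (hs q hq).ne_zero, Finsupp.finsetSum_apply,
    sum_congr rfl fun q hq => by rw [(hs q hq).factorization_pow]]
  simp [Finsupp.single_apply]

end Nat

section

variable {q d : ℕ}

theorem Md_ne_zero : Md q d ≠ 0 :=
  Nat.prod_pow_ne_zero_of_prime (fun _ => Nat.prime_of_mem_filter_primeFactors) _

theorem rd_ne_zero : rd q d ≠ 0 :=
  Nat.prod_pow_ne_zero_of_prime (fun _ => Nat.prime_of_mem_filter_primeFactors) _

theorem Rd_ne_zero : Rd q d ≠ 0 :=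
  mul_ne_zero (Nat.prod_pow_ne_zero_of_prime (fun _ => Nat.prime_of_mem_primeFactors) _)
    (Nat.prod_pow_ne_zero_of_prime (fun _ => Nat.prime_of_mem_filter_primeFactors) _)

theorem Rd'_ne_zero : Rd' q d ≠ 0 :=
  Nat.lcm_ne_zero Rd_ne_zero (pow_ne_zero 2 rd_ne_zero)

theorem factorization_Md (p : ℕ) : (Md q d).factorization p =
    if q.factorization p ≤ d.factorization p then d.factorization p else 0 := by
  rw [Md, Nat.factorization_prod_pow_of_prime fun _ => Nat.prime_of_mem_filter_primeFactors]
  simp only [mem_filter, Nat.mem_primeFactors_iff_factorization_ne_zero]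
  split_ifs <;> omega

theorem factorization_rd (p : ℕ) : (rd q d).factorization p =
    if d.factorization p < q.factorization p then d.factorization p else 0 := by
  rw [rd, Nat.factorization_prod_pow_of_prime fun _ => Nat.prime_of_mem_filter_primeFactors]
  simp only [mem_filter, Nat.mem_primeFactors_iff_factorization_ne_zero]
  split_ifs <;> omega

theorem factorization_Rd (hq : q ≠ 0) (hd : d ≠ 0) (p : ℕ) : (Rd q d).factorization p =
    if d.factorization p < q.factorization p then q.factorization p else 0 := by
  have hcoprime : p ∈ q.primeFactors ∧ ¬p ∣ d ↔
      q.factorization p ≠ 0 ∧ d.factorization p = 0 := by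
    rw [← Nat.mem_primeFactors_iff_factorization_ne_zero, Nat.factorization_eq_zero_iff]
    have := @Nat.prime_of_mem_primeFactors q p
    tauto
  rw [Rd, Nat.factorization_mul
    (Nat.prod_pow_ne_zero_of_prime (fun _ => Nat.prime_of_mem_primeFactors) _)
    (Nat.prod_pow_ne_zero_of_prime (fun _ => Nat.prime_of_mem_filter_primeFactors) _),
    Finsupp.add_apply, Nat.factorization_prod_pow_of_prime fun _ => Nat.prime_of_mem_primeFactors,
    Nat.factorization_prod_pow_of_prime fun _ => Nat.prime_of_mem_filter_primeFactors]
  simp only [mem_filter, hcoprime]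
  simp only [Nat.mem_primeFactors_iff_factorization_ne_zero, Nat.factorization_gcd hq rd_ne_zero,
    Finsupp.inf_apply, factorization_rd]
  split_ifs <;> omega

theorem factorization_Rd' (hq : q ≠ 0) (hd : d ≠ 0) (p : ℕ) : (Rd' q d).factorization p =
    if d.factorization p < q.factorization p then
      max (q.factorization p) (2 * d.factorization p) else 0 := by
  rw [Rd', Nat.factorization_lcm Rd_ne_zero (pow_ne_zero 2 rd_ne_zero), Finsupp.sup_apply,
    Nat.factorization_pow, Finsupp.smul_apply, smul_eq_mul, factorization_Rd hq hd,
    factorization_rd]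
  split_ifs <;> omega

end

theorem stmt6 (q d : ℕ) (hq : 0 < q) (hd : 0 < d) :
    Md q d ^ 2 * Rd' q d = Nat.lcm q (d ^ 2) := by
  have hM : Md q d ^ 2 ≠ 0 := pow_ne_zero 2 Md_ne_zero
  have hd2 : d ^ 2 ≠ 0 := pow_ne_zero 2 hd.ne'
  refine Nat.eq_of_factorization_eq (mul_ne_zero hM Rd'_ne_zero) (Nat.lcm_ne_zero hq.ne' hd2)
    fun p => ?_
  rw [Nat.factorization_mul hM Rd'_ne_zero, Nat.factorization_lcm hq.ne' hd2]
  simp only [Finsupp.add_apply, Finsupp.sup_apply, Nat.factorization_pow, Finsupp.smul_apply,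
    smul_eq_mul, factorization_Md, factorization_Rd' hq.ne' hd.ne']
  split_ifs <;> omega
end

section
/- Let a : ℕ → ℂ satisfy |a(m)| ≤ m^{1/2+ε₀} for some fixed ε₀ ∈ (0, 1/4), let M ≥ 2 be an integer, X > 1, and let ĥ : ℤ → ℂ satisfy |ĥ(n)| ≤ 1/(1+|n|). Then |∑_{|n| ≤ M/2} ĥ(n) ∑_{m ≡ ±n (mod M), m ≠ ±n, 0 < m ≤ X} a(m)/m| ≤ C X^{1/2+2ε₀} M^{−1} log(M) for an absolute constant C. -/
/-!
Write `m = ±n + Mℓ`. Since `|n| ≤ M/2`, the conditions `m ≡ ±n (mod M)`, `m ≠ ±n`, `m > 0`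
force `ℓ ≥ 1`, hence `m ≥ Mℓ/2`, and `m ≤ X` forces `ℓ ≤ 2X/M`. As `|a(m)/m| ≤ X^ε₀ m^{-1/2}`,
the inner sum is at most `X^ε₀ (M/2)^{-1/2} ∑_{ℓ ≤ 2X/M} ℓ^{-1/2} ≤ 4 X^{1/2+ε₀}/M`, and the
outer weights `1/(1+|n|)` sum to `O(log M)`.
-/

open Real Finset

lemma sum_Icc_inv_sqrt_le (L : ℕ) : ∑ ℓ ∈ Icc 1 L, (√(ℓ : ℝ))⁻¹ ≤ 2 * √L := by
  induction L with
  | zero => simp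
  | succ L ih =>
    rw [sum_Icc_succ_top (by omega)]
    have hL : 0 < √((L + 1 : ℕ) : ℝ) := by positivity
    have hsq : √((L + 1 : ℕ) : ℝ) ^ 2 = L + 1 := by
      rw [sq_sqrt (by positivity)]; push_cast; ring
    -- `2 √L √(L+1) ≤ 2L + 1` by AM-GM
    have hinc : (√((L + 1 : ℕ) : ℝ))⁻¹ ≤ 2 * √((L + 1 : ℕ) : ℝ) - 2 * √L := by
      rw [inv_le_iff_one_le_mul₀ hL]
      nlinarith [sq_sqrt (Nat.cast_nonneg (α := ℝ) L),
        sq_nonneg (√(L : ℝ) - √((L + 1 : ℕ) : ℝ))]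
    linarith

lemma sum_Icc_one_div_one_add_abs_le_two_mul_harmonic (M : ℕ) :
    ∑ n ∈ Icc (-M : ℤ) M, 1 / (1 + (|n| : ℝ)) ≤ 2 * harmonic (M + 1) := by
  set f : ℤ → ℝ := fun n => 1 / (1 + (|n| : ℝ))
  set A := (range (M + 1)).image (fun i : ℕ => (i : ℤ))
  set B := (range (M + 1)).image (fun i : ℕ => -(i : ℤ))
  have hf : ∀ n, 0 ≤ f n := fun n => by positivity
  have hA : ∑ n ∈ A, f n ≤ harmonic (M + 1) := by
    refine (sum_image_le_of_nonneg fun n _ => hf n).trans_eq ?_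
    simp [f, harmonic, add_comm]
  have hB : ∑ n ∈ B, f n ≤ harmonic (M + 1) := by
    refine (sum_image_le_of_nonneg fun n _ => hf n).trans_eq ?_
    simp [f, harmonic, add_comm]
  have hsub : Icc (-M : ℤ) M ⊆ A ∪ B := by
    intro n hn
    rw [mem_Icc] at hn
    rcases le_total 0 n with h | h
    · exact mem_union_left _ (mem_image.mpr ⟨n.toNat, by simp; omega, by omega⟩)
    · exact mem_union_right _ (mem_image.mpr ⟨n.natAbs, by simp; omega, by omega⟩)
  have hunion : ∑ n ∈ A ∪ B, f n ≤ ∑ n ∈ A, f n + ∑ n ∈ B, f n := by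
    rw [← sum_union_inter]
    exact le_add_of_nonneg_right (sum_nonneg fun n _ => hf n)
  calc ∑ n ∈ Icc (-M : ℤ) M, f n ≤ ∑ n ∈ A ∪ B, f n :=
        sum_le_sum_of_subset_of_nonneg hsub fun n _ _ => hf n
    _ ≤ 2 * harmonic (M + 1) := by linarith

lemma sum_Icc_one_div_one_add_abs_le_log {M : ℕ} (hM : 2 ≤ M) :
    ∑ n ∈ Icc (-M : ℤ) M, 1 / (1 + (|n| : ℝ)) ≤ 8 * log M := by
  have hM' : (2 : ℝ) ≤ M := by exact_mod_cast hM
  have hlog2 : 1 / 2 < log 2 := by linarith [log_two_gt_d9]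
  have hlogM : log 2 ≤ log M := log_le_log (by norm_num) hM'
  have hlog_succ : log (M + 1) ≤ 2 * log M := by
    rw [← log_rpow (by linarith)]
    exact log_le_log (by positivity) (by norm_num; nlinarith)
  have hharm : (harmonic (M + 1) : ℝ) ≤ 1 + log (M + 1) := by
    exact_mod_cast harmonic_le_one_add_log (M + 1)
  linarith [sum_Icc_one_div_one_add_abs_le_two_mul_harmonic M]

lemma exists_nat_eq_add_mul_of_modEq {M r m : ℤ} (hr : 2 * |r| ≤ M) (hm : 0 ≤ m)
    (hmod : m ≡ r [ZMOD M]) (hne : m ≠ r) : ∃ ℓ : ℕ, 0 < ℓ ∧ m = r + M * ℓ := by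
  obtain ⟨k, hk⟩ := hmod.symm.dvd
  have hkpos : 0 < k := by
    by_contra! h
    have hkneg : k < 0 := lt_of_le_of_ne h (by rintro rfl; exact hne (by linarith))
    have hMk : M * k ≤ -M := by nlinarith [abs_nonneg r]
    rcases hne.lt_or_gt with h' | h' <;> linarith [abs_nonneg r, le_abs_self r]
  exact ⟨k.toNat, by omega, by rw [Int.toNat_of_nonneg hkpos.le]; linarith⟩

lemma sum_inv_sqrt_modEq_le {M : ℕ} (hM : 0 < M) {r : ℤ} (hr : 2 * |r| ≤ M) (N : ℕ) :
    ∑ m ∈ (Icc 1 N).filter (fun m : ℕ => (m : ℤ) ≡ r [ZMOD M] ∧ (m : ℤ) ≠ r),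
        (√(m : ℝ))⁻¹ ≤ 4 * √N / M := by
  set S := (Icc 1 N).filter (fun m : ℕ => (m : ℤ) ≡ r [ZMOD M] ∧ (m : ℤ) ≠ r)
  set L := 2 * N / M
  have hM' : (0 : ℝ) < M := by exact_mod_cast hM
  have hrM : -(M : ℤ) ≤ 2 * r := by linarith [neg_abs_le r]
  have hsub : S ⊆ (Icc 1 L).image (fun ℓ : ℕ => (r + M * ℓ).toNat) := by
    intro m hm
    simp only [S, mem_filter, mem_Icc] at hm
    obtain ⟨⟨hm1, hmN⟩, hmod, hne⟩ := hm
    obtain ⟨ℓ, hℓ, hmℓ⟩ := exists_nat_eq_add_mul_of_modEq hr (by omega) hmod hne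
    have hℓL : ℓ ≤ L := (Nat.le_div_iff_mul_le hM).mpr (by nlinarith)
    exact mem_image.mpr ⟨ℓ, mem_Icc.mpr ⟨hℓ, hℓL⟩, by omega⟩
  have hterm : ∀ ℓ ∈ Icc 1 L,
      (√(((r + M * ℓ).toNat : ℕ) : ℝ))⁻¹ ≤ √(2 / M) * (√(ℓ : ℝ))⁻¹ := by
    intro ℓ hℓ
    have hℓ1 : 1 ≤ ℓ := (mem_Icc.mp hℓ).1
    have hMℓ : (M : ℤ) ≤ M * ℓ := le_mul_of_one_le_right (by positivity) (by exact_mod_cast hℓ1)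
    have hle : (M : ℝ) * ℓ / 2 ≤ ((r + M * ℓ).toNat : ℕ) := by
      have : ((M * ℓ : ℤ) : ℝ) ≤ ((2 * (r + M * ℓ).toNat : ℤ) : ℝ) := by
        exact_mod_cast (by omega : (M * ℓ : ℤ) ≤ 2 * (r + M * ℓ).toNat)
      push_cast at this
      linarith
    calc (√(((r + M * ℓ).toNat : ℕ) : ℝ))⁻¹ ≤ (√((M : ℝ) * ℓ / 2))⁻¹ := by gcongr
      _ = √(2 / M) * (√(ℓ : ℝ))⁻¹ := by
          rw [mul_div_right_comm, sqrt_mul (by positivity), mul_inv, ← sqrt_inv,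
            inv_div]
  have hL : 2 / M * (L : ℝ) ≤ 4 * N / M ^ 2 := by
    have : ((L * M : ℕ) : ℝ) ≤ 2 * N := by exact_mod_cast Nat.div_mul_le_self (2 * N) M
    push_cast at this
    rw [div_mul_eq_mul_div, div_le_div_iff₀ hM' (by positivity)]
    nlinarith
  calc ∑ m ∈ S, (√(m : ℝ))⁻¹
      ≤ ∑ m ∈ (Icc 1 L).image (fun ℓ : ℕ => (r + M * ℓ).toNat), (√(m : ℝ))⁻¹ :=
        sum_le_sum_of_subset_of_nonneg hsub fun _ _ _ => by positivity
    _ ≤ ∑ ℓ ∈ Icc 1 L, (√(((r + M * ℓ).toNat : ℕ) : ℝ))⁻¹ :=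
        sum_image_le_of_nonneg fun _ _ => by positivity
    _ ≤ ∑ ℓ ∈ Icc 1 L, √(2 / M) * (√(ℓ : ℝ))⁻¹ := sum_le_sum hterm
    _ = √(2 / M) * ∑ ℓ ∈ Icc 1 L, (√(ℓ : ℝ))⁻¹ := (mul_sum _ _ _).symm
    _ ≤ √(2 / M) * (2 * √L) := by gcongr; exact sum_Icc_inv_sqrt_le L
    _ = 2 * √(2 / M * L) := by rw [sqrt_mul (by positivity)]; ring
    _ ≤ 2 * √(4 * N / M ^ 2) := by gcongr
    _ = 4 * √N / M := by
        rw [sqrt_div' _ (by positivity), sqrt_sq hM'.le, sqrt_mul (by norm_num),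
          show (4 : ℝ) = 2 ^ 2 by norm_num, sqrt_sq (by norm_num)]
        ring

lemma norm_div_natCast_le_rpow_mul_inv_sqrt {ε X : ℝ} (hε : 0 ≤ ε) {z : ℂ} {m : ℕ}
    (hm : 0 < m) (hmX : (m : ℝ) ≤ X) (hz : ‖z‖ ≤ (m : ℝ) ^ ((1 : ℝ) / 2 + ε)) :
    ‖z / m‖ ≤ X ^ ε * (√(m : ℝ))⁻¹ := by
  have hm' : (0 : ℝ) < m := by exact_mod_cast hm
  calc ‖z / m‖ = ‖z‖ / m := by rw [norm_div, Complex.norm_natCast]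
    _ ≤ (m : ℝ) ^ ((1 : ℝ) / 2 + ε) / m := by gcongr
    _ = (m : ℝ) ^ ε * (√(m : ℝ))⁻¹ := by
        rw [rpow_add hm', mul_comm, mul_div_assoc, ← sqrt_eq_rpow, sqrt_div_self]
    _ ≤ X ^ ε * (√(m : ℝ))⁻¹ := by gcongr

lemma norm_sum_modEq_div_le {ε : ℝ} (hε : 0 ≤ ε) {a : ℕ → ℂ}
    (ha : ∀ m : ℕ, ‖a m‖ ≤ (m : ℝ) ^ ((1 : ℝ) / 2 + ε)) {M : ℕ} (hM : 0 < M) {r : ℤ}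
    (hr : 2 * |r| ≤ M) {X : ℝ} (hX : 0 ≤ X) :
    ‖∑ m ∈ (Icc 1 ⌊X⌋₊).filter (fun m : ℕ => (m : ℤ) ≡ r [ZMOD M] ∧ (m : ℤ) ≠ r),
        a m / (m : ℂ)‖ ≤ 4 * X ^ ((1 : ℝ) / 2 + ε) / M := by
  set S := (Icc 1 ⌊X⌋₊).filter (fun m : ℕ => (m : ℤ) ≡ r [ZMOD M] ∧ (m : ℤ) ≠ r)
  have hterm : ∀ m ∈ S, ‖a m / (m : ℂ)‖ ≤ X ^ ε * (√(m : ℝ))⁻¹ := by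
    intro m hm
    obtain ⟨hm1, hmX⟩ := mem_Icc.mp (mem_filter.mp hm).1
    exact norm_div_natCast_le_rpow_mul_inv_sqrt hε hm1
      ((Nat.cast_le.mpr hmX).trans (Nat.floor_le hX)) (ha m)
  calc ‖∑ m ∈ S, a m / (m : ℂ)‖ ≤ ∑ m ∈ S, X ^ ε * (√(m : ℝ))⁻¹ :=
        (norm_sum_le _ _).trans (sum_le_sum hterm)
    _ = X ^ ε * ∑ m ∈ S, (√(m : ℝ))⁻¹ := (mul_sum _ _ _).symm
    _ ≤ X ^ ε * (4 * √(⌊X⌋₊ : ℝ) / M) := by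
        gcongr; exact sum_inv_sqrt_modEq_le hM hr _
    _ ≤ X ^ ε * (4 * √X / M) := by gcongr; exact Nat.floor_le hX
    _ = 4 * X ^ ((1 : ℝ) / 2 + ε) / M := by
        rw [rpow_add' hX (by positivity), ← sqrt_eq_rpow]; ring

theorem stmt17 :
    ∃ C : ℝ, 0 < C ∧
      ∀ ε₀ : ℝ, 0 < ε₀ → ε₀ < 1 / 4 →
      ∀ a : ℕ → ℂ, (∀ m : ℕ, ‖a m‖ ≤ (m : ℝ) ^ ((1 : ℝ) / 2 + ε₀)) →
      ∀ M : ℕ, 2 ≤ M →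
      ∀ X : ℝ, 1 < X →
      ∀ hhat : ℤ → ℂ, (∀ n : ℤ, ‖hhat n‖ ≤ 1 / (1 + (|n| : ℝ))) →
      ∀ s : ℤ, (s = 1 ∨ s = -1) →
        ‖∑ n ∈ (Finset.Icc (-(M : ℤ)) (M : ℤ)).filter (fun n => 2 * |n| ≤ (M : ℤ)),
            hhat n *
              ∑ m ∈ (Finset.Icc 1 ⌊X⌋₊).filter
                  (fun m : ℕ => (m : ℤ) ≡ s * n [ZMOD (M : ℤ)] ∧ (m : ℤ) ≠ s * n),
                a m / (m : ℂ)‖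
          ≤ C * X ^ ((1 : ℝ) / 2 + 2 * ε₀) * (M : ℝ)⁻¹ * Real.log M := by
  refine ⟨32, by norm_num, fun ε₀ hε _ a ha M hM X hX hhat hhat_le s hs => ?_⟩
  set B := 4 * X ^ ((1 : ℝ) / 2 + ε₀) / M
  have hinner : ∀ n : ℤ, 2 * |n| ≤ (M : ℤ) →
      ‖∑ m ∈ (Icc 1 ⌊X⌋₊).filter
          (fun m : ℕ => (m : ℤ) ≡ s * n [ZMOD M] ∧ (m : ℤ) ≠ s * n), a m / (m : ℂ)‖ ≤ B :=
    fun n hn => norm_sum_modEq_div_le hε.le ha (by omega)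
      (by rcases hs with rfl | rfl <;> simpa using hn) (by linarith)
  have hX_pow : X ^ ((1 : ℝ) / 2 + ε₀) ≤ X ^ ((1 : ℝ) / 2 + 2 * ε₀) :=
    rpow_le_rpow_of_exponent_le hX.le (by linarith)
  calc _ ≤ ∑ n ∈ (Icc (-(M : ℤ)) M).filter (fun n => 2 * |n| ≤ (M : ℤ)),
          1 / (1 + (|n| : ℝ)) * B :=
        (norm_sum_le _ _).trans <| sum_le_sum fun n hn => by
          rw [norm_mul]
          exact mul_le_mul (hhat_le n) (hinner n (mem_filter.mp hn).2) (norm_nonneg _)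
            (by positivity)
    _ ≤ (∑ n ∈ Icc (-(M : ℤ)) M, 1 / (1 + (|n| : ℝ))) * B := by
        rw [sum_mul]
        exact sum_le_sum_of_subset_of_nonneg (filter_subset _ _) fun _ _ _ => by positivity
    _ ≤ 8 * log M * B := by gcongr; exact sum_Icc_one_div_one_add_abs_le_log hM
    _ = 32 * X ^ ((1 : ℝ) / 2 + ε₀) * (M : ℝ)⁻¹ * log M := by ring
    _ ≤ 32 * X ^ ((1 : ℝ) / 2 + 2 * ε₀) * (M : ℝ)⁻¹ * log M := by gcongr
end
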